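/- arXiv:1412.8739 — 4 statements merged into one kernel-verified Lean document; each statement's English description precedes it below -/
import Mathlib

section
/- Let P be a ground logic program over atoms HB, M_P its least Herbrand model, S ⊆ HB a specification, and |·| : HB → ℕ a partial level mapping (represented as a function |·| : HB → Option ℕ). Say an atom H is recurrently covered by P w.r.t. S and |·| if there exists a clause (H, Bs) ∈ P such that |H| and |B| are defined for all B ∈ Bs, every B ∈ Bs lies in S, and |H| > |B| for all B ∈ Bs. If every atom of S is recurrently covered by P w.r.t. S and |·|, then S ⊆ M_P (P is complete w.r.t. S). -/
/-! Strong induction on the level: the covering clause of an atom of level `n` has its body in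
`S` at levels below `n`, hence in `M_P` by induction, and `M_P` is closed under that clause. -/

def IsModel {HB : Type*} (P : Set (HB × List HB)) (S : Set HB) : Prop :=
  ∀ c ∈ P, (∀ B ∈ c.2, B ∈ S) → c.1 ∈ S

def LeastModel {HB : Type*} (P : Set (HB × List HB)) : Set HB :=
  ⋂₀ {S | IsModel P S}

/-- `H` is recurrently covered by `P` w.r.t. `S` and the partial level mapping `lvl`. -/
def RecurrentlyCovered {HB : Type*} (P : Set (HB × List HB)) (S : Set HB)
    (lvl : HB → Option ℕ) (H : HB) : Prop :=
  ∃ Bs nH, (H, Bs) ∈ P ∧ lvl H = some nH ∧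
    ∀ B ∈ Bs, B ∈ S ∧ ∃ nB, lvl B = some nB ∧ nB < nH

section

variable {HB : Type*} (P : Set (HB × List HB))

theorem isModel_leastModel : IsModel P (LeastModel P) :=
  fun c hc hbody _ hT => hT c hc fun B hB => hbody B hB _ hT

theorem mem_leastModel_of_level_eq {S : Set HB} {lvl : HB → Option ℕ}
    (h : ∀ A ∈ S, RecurrentlyCovered P S lvl A) (n : ℕ) :
    ∀ A ∈ S, lvl A = some n → A ∈ LeastModel P := by
  induction n using Nat.strong_induction_on with
  | _ n ih =>
    intro A hA hlvl
    obtain ⟨Bs, nH, hclause, hnH, hBs⟩ := h A hA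
    obtain rfl : nH = n := Option.some_injective _ (hnH.symm.trans hlvl)
    refine isModel_leastModel P (A, Bs) hclause fun B hB => ?_
    obtain ⟨hBS, nB, hnB, hlt⟩ := hBs B hB
    exact ih nB hlt B hBS hnB

end

theorem completeness_recurrently_covered {HB : Type*} (P : Set (HB × List HB))
    (S : Set HB) (lvl : HB → Option ℕ)
    (h : ∀ A ∈ S, RecurrentlyCovered P S lvl A) :
    S ⊆ LeastModel P := by
  intro A hA
  obtain ⟨_, n, _, hn, _⟩ := h A hA
  exact mem_leastModel_of_level_eq P h n A hA hn
end

section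
/- Let P be a ground logic program over atoms HB that is recurrent w.r.t. a (total) level mapping |·| : HB → ℕ, meaning that for every clause (H, Bs) ∈ P and every B ∈ Bs, |H| > |B|. Let S ⊆ HB be a specification such that every atom of S is covered by P w.r.t. S (i.e., for each H ∈ S there is a clause (H, Bs) ∈ P with all atoms of Bs in S). Then S ⊆ M_P, where M_P is the least Herbrand model of P. -/
def Covered {HB : Type*} (P : Set (HB × List HB)) (S : Set HB) (H : HB) : Prop :=
  ∃ Bs, (H, Bs) ∈ P ∧ ∀ B ∈ Bs, B ∈ S

/-- `P` is recurrent w.r.t. a total level mapping `lvl`. -/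
def Recurrent {HB : Type*} (P : Set (HB × List HB)) (lvl : HB → ℕ) : Prop :=
  ∀ c ∈ P, ∀ B ∈ c.2, lvl B < lvl c.1

/-!
Fix a model `M` of `P` and show `H ∈ M` for `H ∈ S` by strong induction on `lvl H`: a clause
covering `H` w.r.t. `S` has its body atoms in `S` and, by recurrence, at strictly lower level,
so they lie in `M`, and then `H ∈ M` because `M` is closed under that clause.
-/

section

variable {HB : Type*} {P : Set (HB × List HB)}

theorem IsModel.mem_of_covered {M : Set HB} (hM : IsModel P M) {H : HB} (hH : Covered P M H) :
    H ∈ M :=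
  let ⟨Bs, hcl, hBs⟩ := hH
  hM (H, Bs) hcl hBs

theorem subset_leastModel_iff {S : Set HB} : S ⊆ LeastModel P ↔ ∀ M, IsModel P M → S ⊆ M :=
  Set.subset_sInter_iff

theorem Recurrent.subset_of_isModel {lvl : HB → ℕ} (hrec : Recurrent P lvl) {S M : Set HB}
    (hcov : ∀ H ∈ S, Covered P S H) (hM : IsModel P M) : S ⊆ M := by
  intro H
  induction H using (measure lvl).wf.induction with
  | _ H ih =>
    intro hHS
    obtain ⟨Bs, hcl, hBs⟩ := hcov H hHS
    exact hM.mem_of_covered ⟨Bs, hcl, fun B hB => ih B (hrec _ hcl B hB) (hBs B hB)⟩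

end

theorem completeness_recurrent {HB : Type*} (P : Set (HB × List HB))
    (S : Set HB) (lvl : HB → ℕ) (hrec : Recurrent P lvl)
    (hcov : ∀ H ∈ S, Covered P S H) :
    S ⊆ LeastModel P :=
  subset_leastModel_iff.mpr fun _ hM => hrec.subset_of_isModel hcov hM
end

section
/- Let P be a ground logic program over atoms HB and M_P its least Herbrand model, defined inductively (H ∈ M_P iff there is a clause (H, Bs) ∈ P with all atoms of Bs in M_P, with the least such set). If P is complete w.r.t. a specification S (S ⊆ M_P), then there exist a specification S' with S ⊆ S' ⊆ HB and a partial level mapping |·| : HB → Option ℕ such that every atom of S' is recurrently covered by P w.r.t. S' and |·| (i.e., for each H ∈ S' there is a clause (H, Bs) ∈ P with all atoms of Bs in S', with |H| and all |B| for B ∈ Bs defined, and |H| > |B| for all B ∈ Bs). -/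
namespace LogicProgram

variable {HB : Type*} (P : Set (HB × List HB))

/-- The atoms derivable by proof trees of height at most `n`. -/
def Stage : ℕ → Set HB
  | 0 => ∅
  | n + 1 => {H | ∃ Bs, (H, Bs) ∈ P ∧ ∀ B ∈ Bs, B ∈ Stage n}

def Derivable : Set HB := ⋃ n, Stage P n

lemma stage_subset_stage_succ : ∀ n, Stage P n ⊆ Stage P (n + 1)
  | 0 => Set.empty_subset _
  | n + 1 => fun _ ⟨Bs, hc, hBs⟩ => ⟨Bs, hc, fun B hB => stage_subset_stage_succ n (hBs B hB)⟩

lemma monotone_stage : Monotone (Stage P) :=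
  monotone_nat_of_le_succ (stage_subset_stage_succ P)

lemma exists_stage_of_forall_mem_derivable {Bs : List HB} (hBs : ∀ B ∈ Bs, B ∈ Derivable P) :
    ∃ n, ∀ B ∈ Bs, B ∈ Stage P n := by
  classical
  obtain ⟨n, hn⟩ := (monotone_stage P).directed_le.exists_mem_subset_of_finset_subset_biUnion
    (s := Bs.toFinset) fun B hB => hBs B (List.mem_toFinset.mp hB)
  exact ⟨n, fun B hB => hn (List.mem_toFinset.mpr hB)⟩

lemma isModel_derivable : IsModel P (Derivable P) := by
  rintro ⟨H, Bs⟩ hc hBs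
  obtain ⟨n, hn⟩ := exists_stage_of_forall_mem_derivable P hBs
  exact Set.mem_iUnion.mpr ⟨n + 1, Bs, hc, hn⟩

lemma leastModel_subset_derivable : LeastModel P ⊆ Derivable P :=
  Set.sInter_subset_of_mem (isModel_derivable P)

open Classical in
noncomputable def level (A : HB) : Option ℕ :=
  if h : ∃ n, A ∈ Stage P n then some (Nat.find h) else none

open Classical in
lemma level_eq_some {A : HB} (h : ∃ n, A ∈ Stage P n) : level P A = some (Nat.find h) := by
  simp only [level, dif_pos h]

open Classical in
lemma recurrentlyCovered_of_mem_derivable {A : HB} (hA : A ∈ Derivable P) :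
    RecurrentlyCovered P (Derivable P) (level P) A := by
  have hA' : ∃ n, A ∈ Stage P n := Set.mem_iUnion.mp hA
  obtain ⟨m, hm⟩ : ∃ m, Nat.find hA' = m + 1 :=
    Nat.exists_eq_succ_of_ne_zero fun h0 => by simpa [h0, Stage] using Nat.find_spec hA'
  obtain ⟨Bs, hc, hBs⟩ : A ∈ Stage P (m + 1) := hm ▸ Nat.find_spec hA'
  refine ⟨Bs, _, hc, level_eq_some P hA', fun B hB => ?_⟩
  have hB' : ∃ n, B ∈ Stage P n := ⟨m, hBs B hB⟩
  refine ⟨Set.mem_iUnion.mpr hB', _, level_eq_some P hB', ?_⟩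
  exact hm ▸ Nat.lt_succ_of_le (Nat.find_min' hB' (hBs B hB))

end LogicProgram

theorem completeness_of_completeness_method {HB : Type*} (P : Set (HB × List HB))
    (S : Set HB) (hcompl : S ⊆ LeastModel P) :
    ∃ (S' : Set HB) (lvl : HB → Option ℕ),
      S ⊆ S' ∧ ∀ A ∈ S', RecurrentlyCovered P S' lvl A :=
  ⟨LogicProgram.Derivable P, LogicProgram.level P,
    hcompl.trans (LogicProgram.leastModel_subset_derivable P),
    fun _ hA => LogicProgram.recurrentlyCovered_of_mem_derivable P hA⟩
end

section
/- Let P be a ground logic program over atoms HB and let Π1, ..., Πn ⊆ P with P = Π1 ∪ ... ∪ Πn, and let S = S1 ∪ ... ∪ Sn ⊆ HB. Suppose that for each i, every atom of Si is covered by Πi w.r.t. S (there is a clause (H, Bs) ∈ Πi with all atoms of Bs in S), and that P is recurrent w.r.t. a level mapping |·| : HB → ℕ. Define, for each atom A, the set of 'compatible' indices as those i such that A ∈ S implies A ∈ Si. Then for any choice function σ : HB → Fin n picking for each atom A ∈ S a compatible index, the 'pruned' least model M_σ — the least set closed under the rule: if A ∈ S, (A, Bs) ∈ Π(σ A), and all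 atoms of Bs are in M_σ, then A ∈ M_σ — contains all of S: S ⊆ M_σ. -/
/-- The pruned least model determined by a clause-selection function `σ`:
the least set closed under the rule that uses, for an atom `A ∈ S`,
only the clauses of the selected subprogram `Pi (σ A)`. -/
def PrunedModel {HB : Type*} {n : ℕ} (Pi : Fin n → Set (HB × List HB))
    (S : Set HB) (σ : HB → Fin n) : Set HB :=
  ⋂₀ {T | ∀ (A : HB) (Bs : List HB),
            A ∈ S → (A, Bs) ∈ Pi (σ A) → (∀ B ∈ Bs, B ∈ T) → A ∈ T}

/-! Every `A ∈ S` is covered by the selected subprogram `Pi (σ A)` through a clause whose body lies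
in `S`, and recurrence makes the body atoms strictly lower than `A`; so strong induction on the level
puts all of `S` into the pruned model. -/

theorem Recurrent.mono {HB : Type*} {P Q : Set (HB × List HB)} {lvl : HB → ℕ}
    (hP : Recurrent P lvl) (hQP : Q ⊆ P) : Recurrent Q lvl :=
  fun c hc => hP c (hQP hc)

section PrunedModel

variable {HB : Type*} {n : ℕ} {Pi : Fin n → Set (HB × List HB)} {S : Set HB} {σ : HB → Fin n}

theorem mem_prunedModel_of_mem_of_clause {A : HB} {Bs : List HB} (hA : A ∈ S)
    (hclause : (A, Bs) ∈ Pi (σ A)) (hBs : ∀ B ∈ Bs, B ∈ PrunedModel Pi S σ) :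
    A ∈ PrunedModel Pi S σ :=
  fun T hT => hT A Bs hA hclause fun B hB => hBs B hB T hT

theorem subset_prunedModel_of_decreasing_cover (lvl : HB → ℕ)
    (hdec : ∀ A ∈ S, ∃ Bs, (A, Bs) ∈ Pi (σ A) ∧ ∀ B ∈ Bs, B ∈ S ∧ lvl B < lvl A) :
    S ⊆ PrunedModel Pi S σ := by
  intro A
  induction A using (measure lvl).wf.induction with
  | _ A ih =>
    intro hA
    obtain ⟨Bs, hclause, hBs⟩ := hdec A hA
    exact mem_prunedModel_of_mem_of_clause hA hclause fun B hB => ih B (hBs B hB).2 (hBs B hB).1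

end PrunedModel

theorem pruned_completeness_general {HB : Type*} {n : ℕ}
    (Pi : Fin n → Set (HB × List HB)) (P : Set (HB × List HB))
    (Spec : Fin n → Set HB) (S : Set HB) (lvl : HB → ℕ)
    (hP : P = ⋃ i, Pi i)
    (hcov : ∀ i, ∀ A ∈ Spec i, Covered (Pi i) S A)
    (hrec : Recurrent P lvl)
    (σ : HB → Fin n) (hσ : ∀ A ∈ S, A ∈ Spec (σ A)) :
    S ⊆ PrunedModel Pi S σ := by
  refine subset_prunedModel_of_decreasing_cover lvl fun A hA => ?_
  obtain ⟨Bs, hclause, hBs⟩ := hcov (σ A) A (hσ A hA)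
  have hrecσ : Recurrent (Pi (σ A)) lvl := hrec.mono (hP ▸ Set.subset_iUnion Pi (σ A))
  exact ⟨Bs, hclause, fun B hB => ⟨hBs B hB, hrecσ _ hclause B hB⟩⟩

theorem pruned_completeness {HB : Type*} {n : ℕ}
    (Pi : Fin n → Set (HB × List HB)) (P : Set (HB × List HB))
    (Spec : Fin n → Set HB) (S : Set HB) (lvl : HB → ℕ)
    (hP : P = ⋃ i, Pi i) (hS : S = ⋃ i, Spec i)
    (hcov : ∀ i, ∀ A ∈ Spec i, Covered (Pi i) S A)
    (hrec : Recurrent P lvl)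
    (σ : HB → Fin n) (hσ : ∀ A ∈ S, A ∈ Spec (σ A)) :
    S ⊆ PrunedModel Pi S σ :=
  pruned_completeness_general Pi P Spec S lvl hP hcov hrec σ hσ
end
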